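/- arXiv:2508.06161 — 2 statements merged into one kernel-verified Lean document; each statement's English description precedes it below -/
import Mathlib

section
/- Let k be an ordered field, I a linearly ordered set, Γ := H[I,k], and let ψ : Γ \ {0} → Γ make (Γ, ψ) an H-couple over k of Hahn type; let K := k((t^Γ)) be the Hahn field. For α = ∑_i α_i e_i ∈ Γ set (t^α)' := −∑_{i ∈ supp α} α_i t^{α + ψ(e_i)} (an element of K). Then for every f = ∑_α f_α t^α ∈ K the family (f_α (t^α)')_{α ∈ supp f} is summable, and the map f ↦ f' := ∑_{α} f_α (t^α)' is a strongly additive k-linear map K → K satisfying (fg)' = f'g + fg' for all f, g ∈ K and f' = 0 for all f ∈ k. -/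
variable {I k : Type*} [LinearOrder I] [Field k] [LinearOrder k] [IsStrictOrderedRing k]

/-- The leading (i.e. earliest-index) coefficient of a Hahn series in the Hahn product
`H[I,k] = HahnSeries I k`; it is `0` for the zero series. -/
noncomputable def leadCoeff (γ : HahnSeries I k) : k :=
  letI := Classical.propDecidable (γ = 0)
  if h : γ = 0 then 0
  else γ.coeff (γ.isWF_support.min (HahnSeries.support_nonempty_iff.mpr h))

lemma leadCoeff_zero : leadCoeff (0 : HahnSeries I k) = 0 := by
  simp [leadCoeff]

lemma leadCoeff_eq {γ : HahnSeries I k} {m : I} (hm : γ.coeff m ≠ 0)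
    (hmin : ∀ j, γ.coeff j ≠ 0 → m ≤ j) : leadCoeff γ = γ.coeff m := by
  have h0 : γ ≠ 0 := by
    intro h; subst h; simp at hm
  rw [leadCoeff, dif_neg h0]
  have h1 : m ∈ γ.support := (HahnSeries.mem_support γ m).2 hm
  have h2 := γ.isWF_support.min_mem (HahnSeries.support_nonempty_iff.mpr h0)
  have h3 : m ≤ γ.isWF_support.min (HahnSeries.support_nonempty_iff.mpr h0) :=
    hmin _ ((HahnSeries.mem_support γ _).1 h2)
  have h4 : ¬ m < γ.isWF_support.min (HahnSeries.support_nonempty_iff.mpr h0) :=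
    γ.isWF_support.not_lt_min _ h1
  have : m = γ.isWF_support.min (HahnSeries.support_nonempty_iff.mpr h0) :=
    le_antisymm h3 (not_lt.mp h4)
  rw [← this]

lemma leadCoeff_ne_zero {γ : HahnSeries I k} (h : γ ≠ 0) : leadCoeff γ ≠ 0 := by
  rw [leadCoeff, dif_neg h]
  exact (HahnSeries.mem_support γ _).1 (γ.isWF_support.min_mem _)

lemma leadCoeff_spec {γ : HahnSeries I k} (h : γ ≠ 0) :
    ∃ m : I, γ.coeff m = leadCoeff γ ∧ γ.coeff m ≠ 0 ∧ ∀ j, γ.coeff j ≠ 0 → m ≤ j := by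
  refine ⟨γ.isWF_support.min (HahnSeries.support_nonempty_iff.mpr h), ?_, ?_, ?_⟩
  · rw [leadCoeff, dif_neg h]
  · exact (HahnSeries.mem_support γ _).1 (γ.isWF_support.min_mem _)
  · intro j hj
    exact not_lt.mp (γ.isWF_support.not_lt_min _ ((HahnSeries.mem_support γ j).2 hj))

lemma leadCoeff_neg (γ : HahnSeries I k) : leadCoeff (-γ) = -leadCoeff γ := by
  by_cases h : γ = 0
  · subst h; simp [leadCoeff_zero]
  · obtain ⟨m, hm, hne, hmin⟩ := leadCoeff_spec h
    have : leadCoeff (-γ) = (-γ).coeff m := by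
      refine leadCoeff_eq ?_ ?_
      · simpa [HahnSeries.coeff_neg] using hne
      · intro j hj
        exact hmin j (by simpa [HahnSeries.coeff_neg] using hj)
    rw [this, HahnSeries.coeff_neg, hm]

lemma leadCoeff_add_pos {x y : HahnSeries I k} (hx : 0 < leadCoeff x) (hy : 0 < leadCoeff y) :
    0 < leadCoeff (x + y) := by
  have hx0 : x ≠ 0 := by rintro rfl; simp [leadCoeff_zero] at hx
  have hy0 : y ≠ 0 := by rintro rfl; simp [leadCoeff_zero] at hy
  obtain ⟨mx, hmx, hmxne, hminx⟩ := leadCoeff_spec hx0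
  obtain ⟨my, hmy, hmyne, hminy⟩ := leadCoeff_spec hy0
  rcases lt_trichotomy mx my with hlt | heq | hgt
  · have : leadCoeff (x + y) = (x + y).coeff mx := by
      refine leadCoeff_eq ?_ ?_
      · have : y.coeff mx = 0 := by
          by_contra hc
          exact absurd (hminy mx hc) (not_le.mpr hlt)
        simp [HahnSeries.coeff_add, this, hmxne]
      · intro j hj
        rw [HahnSeries.coeff_add] at hj
        rcases ne_or_eq (x.coeff j) 0 with h | h
        · exact hminx j h
        · have : y.coeff j ≠ 0 := by
            intro h'; rw [h, h'] at hj; simp at hj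
          exact le_trans hlt.le (hminy j this)
    rw [this, HahnSeries.coeff_add]
    have : y.coeff mx = 0 := by
      by_contra hc
      exact absurd (hminy mx hc) (not_le.mpr hlt)
    rw [this, add_zero, hmx]; exact hx
  · subst heq
    have hsum : (x + y).coeff mx = leadCoeff x + leadCoeff y := by
      rw [HahnSeries.coeff_add, hmx, hmy]
    have : leadCoeff (x + y) = (x + y).coeff mx := by
      refine leadCoeff_eq ?_ ?_
      · rw [hsum]; positivity
      · intro j hj
        rw [HahnSeries.coeff_add] at hj
        rcases ne_or_eq (x.coeff j) 0 with h | h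
        · exact hminx j h
        · have : y.coeff j ≠ 0 := by
            intro h'; rw [h, h'] at hj; simp at hj
          exact hminy j this
    rw [this, hsum]; positivity
  · have : leadCoeff (x + y) = (x + y).coeff my := by
      refine leadCoeff_eq ?_ ?_
      · have : x.coeff my = 0 := by
          by_contra hc
          exact absurd (hminx my hc) (not_le.mpr hgt)
        simp [HahnSeries.coeff_add, this, hmyne]
      · intro j hj
        rw [HahnSeries.coeff_add] at hj
        rcases ne_or_eq (y.coeff j) 0 with h | h
        · exact hminy j h
        · have : x.coeff j ≠ 0 := by
            intro h'; rw [h'] at hj; simp [h] at hj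
          exact le_trans hgt.le (hminx j this)
    rw [this, HahnSeries.coeff_add]
    have : x.coeff my = 0 := by
      by_contra hc
      exact absurd (hminx my hc) (not_le.mpr hgt)
    rw [this, zero_add, hmy]; exact hy

/-- The Hahn product ordering on `H[I,k] = HahnSeries I k`:  `γ ≤ δ` iff `γ = δ` or the leading
coefficient of `δ - γ` is positive; so `γ > 0` iff `γ_{i₀} > 0` where `i₀ = min supp γ`. -/
noncomputable instance hahnLinearOrderedAddCommGroup :
    LinearOrder (HahnSeries I k) :=
  { le := fun γ δ => γ = δ ∨ 0 < leadCoeff (δ - γ)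
    le_refl := fun a => Or.inl rfl
    le_trans := by
      rintro a b c (rfl | hab) (h | hbc)
      · exact Or.inl h
      · exact Or.inr hbc
      · exact Or.inr (h ▸ hab)
      · right
        have := leadCoeff_add_pos hbc hab
        rwa [sub_add_sub_cancel] at this
    le_antisymm := by
      rintro a b (rfl | hab) (h | hba)
      · rfl
      · rfl
      · exact h.symm
      · exfalso
        have : a - b = -(b - a) := by abel
        rw [this, leadCoeff_neg] at hba
        linarith
    le_total := by
      intro a b
      by_cases h : a = b
      · exact Or.inl (Or.inl h)
      · have hne : b - a ≠ 0 := fun hc => h (by linear_combination (norm := abel) -hc)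
        rcases (leadCoeff_ne_zero hne).lt_or_gt with hlt | hgt
        · right; right
          have : a - b = -(b - a) := by abel
          rw [this, leadCoeff_neg]
          linarith
        · exact Or.inl (Or.inr hgt)
    toDecidableLE := Classical.decRel _ }

noncomputable instance hahnIsOrderedAddMonoid : IsOrderedAddMonoid (HahnSeries I k) where
  add_le_add_left := by
    rintro a b (rfl | hab) c
    · exact Or.inl rfl
    · right
      have : b + c - (a + c) = b - a := by abel
      rwa [this]

/-- `(H[I,k], ψ)` is an *H-couple over `k` of Hahn type*. -/
structure IsHCoupleHahnType (ψ : HahnSeries I k → HahnSeries I k) : Prop where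
  A1 : ∀ α β : HahnSeries I k, α ≠ 0 → β ≠ 0 → α + β ≠ 0 → min (ψ α) (ψ β) ≤ ψ (α + β)
  A2 : ∀ (α : HahnSeries I k) (n : ℤ), α ≠ 0 → n ≠ 0 → ψ (n • α) = ψ α
  A3 : ∀ α β : HahnSeries I k, β ≠ 0 → 0 < α → ψ β < α + ψ α
  smul_eq : ∀ (α : HahnSeries I k) (c : k), α ≠ 0 → c ≠ 0 → ψ (c • α) = ψ α
  mono : ∀ α β : HahnSeries I k, 0 < α → α ≤ β → ψ β ≤ ψ α
  hahnType : ∀ α β : HahnSeries I k, α ≠ 0 → β ≠ 0 → ψ α = ψ β →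
    ∃ c : k, c ≠ 0 ∧ (α - c • β = 0 ∨ ψ α < ψ (α - c • β))

/-- The `γ`-coefficient of the formal derivative
`(t^α)' = -∑_{i ∈ supp α} α_i t^{α + ψ(e_i)}` of the monomial `t^α` in the Hahn field
`K = k((t^Γ))`, `Γ = H[I,k]`. -/
noncomputable def tderivCoeff (ψ : HahnSeries I k → HahnSeries I k)
    (α γ : HahnSeries I k) : k :=
  -∑ᶠ i ∈ {i : I | i ∈ α.support ∧ α + ψ (HahnSeries.single i 1) = γ}, α.coeff i

/-- A family of elements of the Hahn field `K = k((t^Γ))` is *summable* if the union of the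
supports is well-ordered and for each `γ` only finitely many members have nonzero
`γ`-coefficient. -/
def HSummable {ι : Type*} (F : ι → HahnSeries (HahnSeries I k) k) : Prop :=
  (⋃ l, (F l).support).IsWF ∧ ∀ γ : HahnSeries I k, {l | (F l).coeff γ ≠ 0}.Finite

/-- `g` is the sum of the (summable) family `F`: its `γ`-coefficient is the sum of the
`γ`-coefficients of the members. -/
def HIsSum {ι : Type*} (F : ι → HahnSeries (HahnSeries I k) k)
    (g : HahnSeries (HahnSeries I k) k) : Prop :=
  ∀ γ : HahnSeries I k, g.coeff γ = ∑ᶠ l, (F l).coeff γ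

namespace HahnDeriv

open HahnSeries

variable {I k : Type*} [LinearOrder I] [Field k] [LinearOrder k] [IsStrictOrderedRing k]

local notation "Γ'" => HahnSeries I k

noncomputable def e (i : I) : HahnSeries I k := HahnSeries.single i (1 : k)

lemma e_ne_zero (i : I) : (e i : Γ') ≠ 0 := HahnSeries.single_ne_zero one_ne_zero

lemma le_def {a b : Γ'} : a ≤ b ↔ a = b ∨ 0 < leadCoeff (b - a) := Iff.rfl

lemma lt_def {a b : Γ'} : a < b ↔ 0 < leadCoeff (b - a) := by
  constructor
  · intro h
    rcases (le_def.1 h.le) with rfl | h'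
    · exact absurd rfl h.ne
    · exact h'
  · intro h
    have hne : a ≠ b := by
      intro h'; subst h'; simp [leadCoeff_zero] at h
    exact lt_of_le_of_ne (le_def.2 (Or.inr h)) hne

lemma pos_iff {a : Γ'} : 0 < a ↔ 0 < leadCoeff a := by
  rw [lt_def, sub_zero]

/-- If `a` has positive coefficient at a minimal element of its support, then `0 < a`. -/
lemma pos_of_coeff {a : Γ'} {m : I} (hm : 0 < a.coeff m)
    (hmin : ∀ j, a.coeff j ≠ 0 → m ≤ j) : 0 < a := by
  rw [pos_iff, leadCoeff_eq hm.ne' hmin]; exact hm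

lemma e_pos (i : I) : 0 < (e i : Γ') := by
  refine pos_of_coeff (m := i) ?_ ?_
  · rw [e, HahnSeries.coeff_single_same]; exact one_pos
  · intro j hj
    rw [e, HahnSeries.coeff_single] at hj
    by_contra h
    rw [if_neg (by exact fun hji => h (le_of_eq hji.symm))] at hj
    exact hj rfl

noncomputable def leadIdx (a : HahnSeries I k) (h : a ≠ 0) : I :=
  a.isWF_support.min (HahnSeries.support_nonempty_iff.mpr h)

lemma leadIdx_coeff_ne {a : Γ'} (h : a ≠ 0) : a.coeff (leadIdx a h) ≠ 0 :=
  (HahnSeries.mem_support a _).1 (a.isWF_support.min_mem _)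

lemma leadIdx_min {a : Γ'} (h : a ≠ 0) {j : I} (hj : a.coeff j ≠ 0) : leadIdx a h ≤ j :=
  not_lt.mp (a.isWF_support.not_lt_min _ ((HahnSeries.mem_support a j).2 hj))

lemma leadCoeff_eq_leadIdx {a : Γ'} (h : a ≠ 0) : leadCoeff a = a.coeff (leadIdx a h) := by
  rw [leadCoeff, dif_neg h]; rfl

lemma leadIdx_coeff_pos {a : Γ'} (h : 0 < a) :
    0 < a.coeff (leadIdx a h.ne') := by
  have := pos_iff.1 h
  rwa [leadCoeff_eq_leadIdx h.ne'] at this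

lemma e_coeff_same (i : I) : (e i : Γ').coeff i = 1 := HahnSeries.coeff_single_same i 1

lemma e_coeff_ne {i j : I} (h : j ≠ i) : (e i : Γ').coeff j = 0 := HahnSeries.coeff_single_of_ne h

variable {ψ : HahnSeries I k → HahnSeries I k}

/-- `ψ` of a positive element equals `ψ` of `e` at its leading index. -/
lemma psi_eq (hψ : IsHCoupleHahnType ψ) {δ : Γ'} {m : I} (hm : 0 < δ.coeff m)
    (hmin : ∀ j, δ.coeff j ≠ 0 → m ≤ j) : ψ δ = ψ (e m) := by
  set c := δ.coeff m with hc
  have hc2 : (0:k) < c / 2 := by positivity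
  have h1 : (c / 2) • (e m : Γ') ≤ δ := by
    have : 0 < δ - (c / 2) • (e m : Γ') := by
      refine pos_of_coeff (m := m) ?_ ?_
      · rw [HahnSeries.coeff_sub, HahnSeries.coeff_smul, e_coeff_same m]
        simp only [smul_eq_mul, mul_one]
        linarith
      · intro j hj
        rcases eq_or_ne j m with rfl | hne
        · exact le_refl _
        · rw [HahnSeries.coeff_sub, HahnSeries.coeff_smul, e_coeff_ne hne] at hj
          simp only [smul_eq_mul, mul_zero, sub_zero] at hj
          exact hmin j hj
    exact (sub_pos.mp this).le
  have h2 : δ ≤ (2 * c) • (e m : Γ') := by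
    have : 0 < (2 * c) • (e m : Γ') - δ := by
      refine pos_of_coeff (m := m) ?_ ?_
      · rw [HahnSeries.coeff_sub, HahnSeries.coeff_smul, e_coeff_same m]
        simp only [smul_eq_mul, mul_one]
        linarith
      · intro j hj
        rcases eq_or_ne j m with rfl | hne
        · exact le_refl _
        · rw [HahnSeries.coeff_sub, HahnSeries.coeff_smul, e_coeff_ne hne] at hj
          simp only [smul_eq_mul, mul_zero, zero_sub, neg_ne_zero] at hj
          exact hmin j hj
    exact (sub_pos.mp this).le
  have hepos : (0:Γ') < e m := e_pos m
  have hpos1 : (0:Γ') < (c / 2) • (e m : Γ') := by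
    refine pos_of_coeff (m := m) ?_ ?_
    · rw [HahnSeries.coeff_smul, e_coeff_same m]; simpa using hc2
    · intro j hj
      rcases eq_or_ne j m with rfl | hne
      · exact le_refl _
      · rw [HahnSeries.coeff_smul, e_coeff_ne hne] at hj; simp at hj
  have hposδ : (0:Γ') < δ := lt_of_lt_of_le hpos1 h1
  have e1 : ψ ((c / 2) • (e m : Γ')) = ψ (e m) :=
    hψ.smul_eq (e m) (c / 2) (e_ne_zero m) hc2.ne'
  have e2 : ψ ((2 * c) • (e m : Γ')) = ψ (e m) :=
    hψ.smul_eq (e m) (2 * c) (e_ne_zero m) (by positivity)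
  have le1 : ψ δ ≤ ψ (e m) := e1 ▸ hψ.mono _ _ hpos1 h1
  have le2 : ψ (e m) ≤ ψ δ := e2 ▸ hψ.mono _ _ hposδ h2
  exact le_antisymm le1 le2

lemma e_lt_e {i j : I} (hij : i < j) : (e j : Γ') < e i := by
  rw [lt_def, ← pos_iff]
  refine pos_of_coeff (m := i) ?_ ?_
  · rw [HahnSeries.coeff_sub, e_coeff_same i, e_coeff_ne hij.ne]
    norm_num
  · intro j' hj'
    rcases eq_or_ne j' i with rfl | h1
    · exact le_rfl
    rcases eq_or_ne j' j with rfl | h2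
    · exact hij.le
    rw [HahnSeries.coeff_sub, e_coeff_ne h2, e_coeff_ne h1] at hj'
    simp at hj'

lemma psi_e_mono (hψ : IsHCoupleHahnType ψ) {i j : I} (hij : i ≤ j) :
    ψ (e i) ≤ ψ (e j) := by
  rcases eq_or_lt_of_le hij with rfl | h
  · exact le_rfl
  · exact hψ.mono (e j) (e i) (e_pos j) (e_lt_e h).le

lemma psi_e_strictMono (hψ : IsHCoupleHahnType ψ) {i j : I} (hij : i < j) :
    ψ (e i) < ψ (e j) := by
  rcases lt_or_eq_of_le (psi_e_mono hψ hij.le) with h | heq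
  · exact h
  exfalso
  obtain ⟨c, hc, hcase⟩ := hψ.hahnType (e i) (e j) (e_ne_zero i) (e_ne_zero j) heq
  have hδi : ((e i : Γ') - c • e j).coeff i = 1 := by
    rw [HahnSeries.coeff_sub, e_coeff_same i, HahnSeries.coeff_smul, e_coeff_ne hij.ne,
      smul_zero, sub_zero]
  rcases hcase with h0 | hlt
  · rw [h0] at hδi; simp at hδi
  · have : ψ ((e i : Γ') - c • e j) = ψ (e i) := by
      refine psi_eq hψ (m := i) (by rw [hδi]; norm_num) ?_
      intro j' hj'
      rcases eq_or_ne j' i with rfl | h1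
      · exact le_rfl
      rcases eq_or_ne j' j with rfl | h2
      · exact hij.le
      rw [HahnSeries.coeff_sub, e_coeff_ne h1, HahnSeries.coeff_smul, e_coeff_ne h2] at hj'
      simp at hj'
    rw [this] at hlt
    exact lt_irrefl _ hlt

lemma lt_of_psi_e_lt (hψ : IsHCoupleHahnType ψ) {i j : I} (h : ψ (e i) < ψ (e j)) : i < j := by
  by_contra hc
  push_neg at hc
  exact absurd (psi_e_mono hψ hc) (not_le.mpr h)

/-- Key inequality (Lemma L): if `α < β` and `β + ψ(e j) ≤ α + ψ(e i)` then the coefficients of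
`β - α` vanish at all indices `≤ j`. -/
lemma coeff_sub_eq_zero (hψ : IsHCoupleHahnType ψ) {α β : Γ'} {i j : I}
    (hαβ : α < β) (hγ : β + ψ (e j) ≤ α + ψ (e i)) {j' : I} (hj' : j' ≤ j) :
    (β - α).coeff j' = 0 := by
  set δ := β - α with hδdef
  have hδ : (0:Γ') < δ := sub_pos.mpr hαβ
  have hδne : δ ≠ 0 := hδ.ne'
  set m := leadIdx δ hδne with hm
  have hψδ : ψ δ = ψ (e m) :=
    psi_eq hψ (leadIdx_coeff_pos hδ) (fun j hj => leadIdx_min hδne hj)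
  have hA3 : ψ (e i) < δ + ψ δ := hψ.A3 δ (e i) (e_ne_zero i) hδ
  have h1 : ψ (e j) ≤ ψ (e i) - δ := by
    have := sub_le_sub_right hγ (α + δ)
    calc ψ (e j) = β + ψ (e j) - (α + δ) := by rw [hδdef]; abel
    _ ≤ α + ψ (e i) - (α + δ) := this
    _ = ψ (e i) - δ := by abel
  have h2 : ψ (e j) < ψ (e m) := by
    rw [← hψδ]
    calc ψ (e j) ≤ ψ (e i) - δ := h1
    _ < (δ + ψ δ) - δ := by exact sub_lt_sub_right hA3 δ
    _ = ψ δ := by abel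
  have hjm : j < m := lt_of_psi_e_lt hψ h2
  by_contra hne
  exact absurd (leadIdx_min hδne hne) (not_le.mpr (lt_of_le_of_lt hj' hjm))

/-- Key combinatorial lemma (Lemma M): there is no monotone sequence `α` with indices
`i n ∈ supp (α n)` such that `ψ(e (i n))` is strictly decreasing and `α n + ψ(e (i n))` is
non-increasing. -/
lemma no_bad_seq (hψ : IsHCoupleHahnType ψ) (α : ℕ → Γ') (i : ℕ → I)
    (hmono : Monotone α) (hsupp : ∀ n, (α n).coeff (i n) ≠ 0)
    (hkey : ∀ n m, n < m → ψ (e (i m)) < ψ (e (i n)) ∧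
      α m + ψ (e (i m)) ≤ α n + ψ (e (i n))) : False := by
  have hanti : StrictAnti i := by
    intro n m hnm
    exact lt_of_psi_e_lt hψ (hkey n m hnm).1
  have hin0 : ∀ m, 0 < m → (α 0).coeff (i m) ≠ 0 := by
    intro m hm
    rcases eq_or_lt_of_le (hmono (Nat.zero_le m)) with heq | hlt
    · rw [heq]; exact hsupp m
    · have h0 := (hkey 0 m hm).2
      have hz : (α m - α 0).coeff (i m) = 0 :=
        coeff_sub_eq_zero hψ hlt h0 (le_refl (i m))
      rw [HahnSeries.coeff_sub, sub_eq_zero] at hz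
      rw [← hz]; exact hsupp m
  have : ∀ n : ℕ, (fun m => i (m + 1)) n ∈ (α 0).support := by
    intro n
    exact (HahnSeries.mem_support _ _).2 (hin0 (n + 1) (Nat.succ_pos n))
  have hdesc : StrictAnti (fun m => i (m + 1)) := fun n m hnm =>
    hanti (Nat.add_lt_add_right hnm 1)
  exact (Set.isWF_iff_no_descending_seq.1 (α 0).isWF_support) _ hdesc this

lemma psi_e_inj (hψ : IsHCoupleHahnType ψ) {i j : I} (h : ψ (e i) = ψ (e j)) : i = j := by
  rcases lt_trichotomy i j with hl | he | hg
  · exact absurd h (psi_e_strictMono hψ hl).ne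
  · exact he
  · exact absurd h.symm (psi_e_strictMono hψ hg).ne

lemma tderivCoeff_apply (hψ : IsHCoupleHahnType ψ) (α : Γ') (i : I) :
    tderivCoeff ψ α (α + ψ (e i)) = -(α.coeff i) := by
  rw [tderivCoeff]
  have hset : {i' : I | i' ∈ α.support ∧ α + ψ (HahnSeries.single i' 1) = α + ψ (e i)}
      = {i' : I | α.coeff i' ≠ 0 ∧ i' = i} := by
    ext i'
    simp only [Set.mem_setOf_eq, HahnSeries.mem_support]
    constructor
    · rintro ⟨h1, h2⟩
      exact ⟨h1, psi_e_inj hψ (add_right_injective α h2)⟩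
    · rintro ⟨h1, rfl⟩
      exact ⟨h1, rfl⟩
  rw [hset]
  by_cases hα : α.coeff i = 0
  · have : {i' : I | α.coeff i' ≠ 0 ∧ i' = i} = ∅ := by
      ext i'; simp only [Set.mem_setOf_eq, Set.mem_empty_iff_false, iff_false]
      rintro ⟨h1, rfl⟩; exact h1 hα
    rw [this, finsum_mem_empty, hα, neg_zero]
  · have : {i' : I | α.coeff i' ≠ 0 ∧ i' = i} = {i} := by
      ext i'; simp only [Set.mem_setOf_eq, Set.mem_singleton_iff]
      constructor
      · rintro ⟨_, rfl⟩; rfl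
      · rintro rfl; exact ⟨hα, rfl⟩
    rw [this, finsum_mem_singleton]

lemma tderivCoeff_eq_zero (α γ : Γ') (h : ∀ i, γ ≠ α + ψ (e i)) :
    tderivCoeff ψ α γ = 0 := by
  rw [tderivCoeff]
  have : {i : I | i ∈ α.support ∧ α + ψ (HahnSeries.single i 1) = γ} = ∅ := by
    ext i; simp only [Set.mem_setOf_eq, Set.mem_empty_iff_false, iff_false]
    rintro ⟨_, h2⟩
    exact h i h2.symm
  rw [this, finsum_mem_empty, neg_zero]

lemma tderivCoeff_support (α γ : Γ') (h : tderivCoeff ψ α γ ≠ 0) :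
    ∃ i, α.coeff i ≠ 0 ∧ α + ψ (e i) = γ := by
  by_contra hc
  push_neg at hc
  apply h
  rw [tderivCoeff]
  have : {i : I | i ∈ α.support ∧ α + ψ (HahnSeries.single i 1) = γ} = ∅ := by
    ext i
    simp only [Set.mem_setOf_eq, Set.mem_empty_iff_false, iff_false, HahnSeries.mem_support]
    rintro ⟨h1, h2⟩
    exact hc i h1 h2
  rw [this, finsum_mem_empty, neg_zero]

/-- The union over a WF set `U` of supports of the monomial derivatives is WF. -/
lemma isWF_union_tderiv (hψ : IsHCoupleHahnType ψ) {U : Set Γ'} (hU : U.IsWF) :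
    Set.IsWF {γ : Γ' | ∃ α ∈ U, tderivCoeff ψ α γ ≠ 0} := by
  rw [Set.isWF_iff_no_descending_seq]
  intro g hg hmem
  have hsel : ∀ n : ℕ, ∃ p : Γ' × I, p.1 ∈ U ∧ (p.1).coeff p.2 ≠ 0 ∧
      p.1 + ψ (e p.2) = g n := by
    intro n
    obtain ⟨α, hα, hτ⟩ := hmem n
    obtain ⟨i, hi1, hi2⟩ := tderivCoeff_support α (g n) hτ
    exact ⟨(α, i), hα, hi1, hi2⟩
  choose p hp1 hp2 hp3 using hsel
  obtain ⟨φ, hφ⟩ := (hU.isPWO).exists_monotone_subseq (f := fun n => (p n).1) (fun n => hp1 n)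
  refine no_bad_seq hψ (fun n => (p (φ n)).1) (fun n => (p (φ n)).2) hφ
    (fun n => hp2 (φ n)) ?_
  intro n m hnm
  have hφnm : φ n < φ m := φ.strictMono hnm
  have hglt : g (φ m) < g (φ n) := hg hφnm
  have hαle : (p (φ n)).1 ≤ (p (φ m)).1 := hφ hnm.le
  constructor
  · have h1 : ψ (e (p (φ m)).2) = g (φ m) - (p (φ m)).1 := by
      rw [← hp3 (φ m)]; abel
    have h2 : ψ (e (p (φ n)).2) = g (φ n) - (p (φ n)).1 := by
      rw [← hp3 (φ n)]; abel
    rw [h1, h2]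
    exact sub_lt_sub_iff.mpr (add_lt_add_of_lt_of_le hglt hαle)
  · rw [hp3 (φ m), hp3 (φ n)]
    exact hglt.le

/-- Finiteness of the set of pairs contributing to a fixed coefficient `γ`. -/
lemma finite_pairs (hψ : IsHCoupleHahnType ψ) {A B : Set Γ'} (hA : A.IsWF) (hB : B.IsWF)
    (γ : Γ') :
    {p : Γ' × Γ' | p.1 ∈ A ∧ p.2 ∈ B ∧ tderivCoeff ψ p.2 (γ - p.1) ≠ 0}.Finite := by
  set S := {p : Γ' × Γ' | p.1 ∈ A ∧ p.2 ∈ B ∧ tderivCoeff ψ p.2 (γ - p.1) ≠ 0} with hS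
  by_contra hinf
  have hinf2 : S.Infinite := hinf
  let q0 := hinf2.natEmbedding
  have hfmem : ∀ n : ℕ, (q0 n : Γ' × Γ') ∈ A ×ˢ B := by
    intro n
    exact ⟨(q0 n).2.1, (q0 n).2.2.1⟩
  obtain ⟨φ, hφ⟩ := (hA.isPWO.prod hB.isPWO).exists_monotone_subseq
    (f := fun n => (q0 n : Γ' × Γ')) hfmem
  set p : ℕ → Γ' × Γ' := fun n => (q0 (φ n) : Γ' × Γ') with hpdef
  have hpinj : Function.Injective p :=
    Subtype.coe_injective.comp (q0.injective.comp φ.injective)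
  have hpmem : ∀ n, p n ∈ S := fun n => (q0 (φ n)).2
  have hsel : ∀ n : ℕ, ∃ i : I, ((p n).2).coeff i ≠ 0 ∧ (p n).2 + ψ (e i) = γ - (p n).1 := by
    intro n
    exact tderivCoeff_support _ _ (hpmem n).2.2
  choose i hi1 hi2 using hsel
  have hmono : Monotone fun n => (p n).2 := fun n m h => (hφ h).2
  refine no_bad_seq hψ (fun n => (p n).2) i hmono hi1 ?_
  intro n m hnm
  have hle1 : (p n).1 ≤ (p m).1 := (hφ hnm.le).1
  have hle2 : (p n).2 ≤ (p m).2 := (hφ hnm.le).2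
  have hne : p n ≠ p m := fun h => (Nat.ne_of_lt hnm) (hpinj h)
  have hlt : (p n).1 + (p n).2 < (p m).1 + (p m).2 := by
    rcases eq_or_lt_of_le hle1 with h1 | h1
    · rcases eq_or_lt_of_le hle2 with h2 | h2
      · exact absurd (Prod.ext h1 h2) hne
      · rw [h1]; exact add_lt_add_right h2 _
    · exact add_lt_add_of_lt_of_le h1 hle2
  have heq : ∀ l, ψ (e (i l)) = γ - ((p l).1 + (p l).2) := by
    intro l
    rw [← sub_sub, ← hi2 l]; abel
  constructor
  · rw [heq n, heq m]
    exact sub_lt_sub_left hlt γ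
  · rw [hi2 n, hi2 m]
    exact sub_le_sub_left hle1 γ

lemma finite_tderiv (hψ : IsHCoupleHahnType ψ) {U : Set Γ'} (hU : U.IsWF) (γ : Γ') :
    {α : Γ' | α ∈ U ∧ tderivCoeff ψ α γ ≠ 0}.Finite := by
  have h0 : ({0} : Set Γ').IsWF := (Set.finite_singleton 0).isWF
  have hfin := finite_pairs hψ h0 hU γ
  have hsub : {α : Γ' | α ∈ U ∧ tderivCoeff ψ α γ ≠ 0} ⊆ (fun α : Γ' => ((0:Γ'), α)) ⁻¹'
      {p : Γ' × Γ' | p.1 ∈ ({0} : Set Γ') ∧ p.2 ∈ U ∧ tderivCoeff ψ p.2 (γ - p.1) ≠ 0} := by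
    intro α hα
    refine ⟨rfl, hα.1, ?_⟩
    rw [sub_zero]
    exact hα.2
  refine Set.Finite.subset (hfin.preimage ?_) hsub
  intro a _ b _ h
  exact congrArg Prod.snd h

/-- The monomial derivative `T α = (t^α)'`. -/
noncomputable def T (hψ : IsHCoupleHahnType ψ) (α : Γ') : HahnSeries Γ' k where
  coeff := tderivCoeff ψ α
  isPWO_support' := by
    refine Set.IsPWO.mono (isWF_union_tderiv hψ (Set.finite_singleton α).isWF).isPWO ?_
    intro γ hγ
    exact ⟨α, rfl, hγ⟩

lemma T_coeff (hψ : IsHCoupleHahnType ψ) (α γ : Γ') :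
    (T hψ α).coeff γ = tderivCoeff ψ α γ := rfl

lemma support_term_finite (hψ : IsHCoupleHahnType ψ) (f : HahnSeries Γ' k) (γ : Γ') :
    (Function.support fun β => f.coeff β * tderivCoeff ψ β γ).Finite := by
  refine Set.Finite.subset (finite_tderiv hψ f.isWF_support γ) ?_
  intro β hβ
  rw [Function.mem_support] at hβ
  exact ⟨fun h => hβ (by rw [h, zero_mul]), fun h => hβ (by rw [h, mul_zero])⟩

/-- The derivation `D f = f'`. -/
noncomputable def D (hψ : IsHCoupleHahnType ψ) (f : HahnSeries Γ' k) : HahnSeries Γ' k where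
  coeff := fun γ => ∑ᶠ β, f.coeff β * tderivCoeff ψ β γ
  isPWO_support' := by
    refine Set.IsPWO.mono (isWF_union_tderiv hψ f.isWF_support).isPWO ?_
    intro γ hγ
    rw [Function.mem_support] at hγ
    by_contra hc
    rw [Set.mem_setOf_eq] at hc
    push_neg at hc
    refine hγ (finsum_eq_zero_of_forall_eq_zero fun β => ?_)
    by_cases hβ : f.coeff β = 0
    · rw [hβ, zero_mul]
    · rw [hc β ((HahnSeries.mem_support f β).2 hβ), mul_zero]

lemma D_coeff (hψ : IsHCoupleHahnType ψ) (f : HahnSeries Γ' k) (γ : Γ') :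
    (D hψ f).coeff γ = ∑ᶠ β, f.coeff β * tderivCoeff ψ β γ := rfl

lemma smulT_coeff (hψ : IsHCoupleHahnType ψ) (c : k) (α γ : Γ') :
    ((c • T hψ α : HahnSeries Γ' k)).coeff γ = c * tderivCoeff ψ α γ := by
  rw [HahnSeries.coeff_smul, T_coeff, smul_eq_mul]

lemma part1 (hψ : IsHCoupleHahnType ψ) (f : HahnSeries Γ' k) :
    HSummable (fun α : f.support => f.coeff ↑α • T hψ ↑α) ∧
    HIsSum (fun α : f.support => f.coeff ↑α • T hψ ↑α) (D hψ f) := by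
  constructor
  · constructor
    · refine Set.IsWF.mono (isWF_union_tderiv hψ f.isWF_support) ?_
      intro γ hγ
      rw [Set.mem_iUnion] at hγ
      obtain ⟨l, hl⟩ := hγ
      rw [HahnSeries.mem_support, smulT_coeff] at hl
      exact ⟨↑l, l.2, fun h => hl (by rw [h, mul_zero])⟩
    · intro γ
      refine Set.Finite.subset ((finite_tderiv hψ f.isWF_support γ).preimage
        (Set.injOn_of_injective Subtype.coe_injective)) ?_
      intro l hl
      rw [Set.mem_setOf_eq, smulT_coeff] at hl
      exact ⟨l.2, fun h => hl (by rw [h, mul_zero])⟩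
  · intro γ
    rw [D_coeff]
    have h1 : ∑ᶠ l : f.support, (f.coeff ↑l • T hψ ↑l).coeff γ
        = ∑ᶠ β ∈ f.support, f.coeff β * tderivCoeff ψ β γ := by
      rw [← finsum_set_coe_eq_finsum_mem]
      exact finsum_congr fun l => smulT_coeff hψ _ _ _
    rw [h1, finsum_mem_inter_support_eq' _ _ Set.univ ?_, finsum_mem_univ]
    intro β hβ
    simp only [Set.mem_univ, iff_true]
    rw [Function.mem_support] at hβ
    exact (HahnSeries.mem_support f β).2 fun h => hβ (by rw [h, zero_mul])

lemma exists_ne_zero_of_finsum_ne_zero {ι : Type*} {h : ι → k} (H : ∑ᶠ i, h i ≠ 0) :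
    ∃ i, h i ≠ 0 := by
  by_contra hc
  push_neg at hc
  exact H (finsum_eq_zero_of_forall_eq_zero hc)

lemma part2 (hψ : IsHCoupleHahnType ψ) {ι : Type*} (F : ι → HahnSeries Γ' k)
    (g : HahnSeries Γ' k) (hF : HSummable F) (hg : HIsSum F g) :
    HSummable (fun l => D hψ (F l)) ∧ HIsSum (fun l => D hψ (F l)) (D hψ g) := by
  obtain ⟨hUwf, hfin⟩ := hF
  set U : Set Γ' := ⋃ l, (F l).support with hUdef
  have hsuppFl : ∀ l, (F l).support ⊆ U := fun l => Set.subset_iUnion (fun l => (F l).support) l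
  have hsuppg : g.support ⊆ U := by
    intro β hβ
    rw [HahnSeries.mem_support, hg β] at hβ
    obtain ⟨l, hl⟩ := exists_ne_zero_of_finsum_ne_zero hβ
    exact hsuppFl l ((HahnSeries.mem_support _ _).2 hl)
  -- the per-coefficient finite sets
  have hAfin : ∀ γ : Γ', {α : Γ' | α ∈ U ∧ tderivCoeff ψ α γ ≠ 0}.Finite :=
    fun γ => finite_tderiv hψ hUwf γ
  have hLfin : ∀ γ : Γ',
      (⋃ α ∈ {α : Γ' | α ∈ U ∧ tderivCoeff ψ α γ ≠ 0}, {l : ι | (F l).coeff α ≠ 0}).Finite :=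
    fun γ => Set.Finite.biUnion (hAfin γ) (fun α _ => hfin α)
  have hDsupp : ∀ (l : ι) (γ : Γ'),
      (Function.support fun β => (F l).coeff β * tderivCoeff ψ β γ)
        ⊆ {α : Γ' | α ∈ U ∧ tderivCoeff ψ α γ ≠ 0} := by
    intro l γ β hβ
    rw [Function.mem_support] at hβ
    exact ⟨hsuppFl l ((HahnSeries.mem_support _ _).2 fun h => hβ (by rw [h, zero_mul])),
      fun h => hβ (by rw [h, mul_zero])⟩
  have hDlL : ∀ (γ : Γ') (l : ι), (D hψ (F l)).coeff γ ≠ 0 →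
      l ∈ ⋃ α ∈ {α : Γ' | α ∈ U ∧ tderivCoeff ψ α γ ≠ 0}, {l : ι | (F l).coeff α ≠ 0} := by
    intro γ l hl
    rw [D_coeff] at hl
    obtain ⟨β, hβ⟩ := exists_ne_zero_of_finsum_ne_zero hl
    have hβA : β ∈ {α : Γ' | α ∈ U ∧ tderivCoeff ψ α γ ≠ 0} := hDsupp l γ hβ
    rw [Set.mem_iUnion]
    exact ⟨β, Set.mem_iUnion.2 ⟨hβA, fun h => hβ (by rw [h, zero_mul])⟩⟩
  constructor
  · constructor
    · refine Set.IsWF.mono (isWF_union_tderiv hψ hUwf) ?_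
      intro γ hγ
      rw [Set.mem_iUnion] at hγ
      obtain ⟨l, hl⟩ := hγ
      rw [HahnSeries.mem_support, D_coeff] at hl
      obtain ⟨β, hβ⟩ := exists_ne_zero_of_finsum_ne_zero hl
      have := hDsupp l γ hβ
      exact ⟨β, this.1, this.2⟩
    · intro γ
      exact Set.Finite.subset (hLfin γ) (fun l hl => hDlL γ l hl)
  · intro γ
    classical
    set A := {α : Γ' | α ∈ U ∧ tderivCoeff ψ α γ ≠ 0} with hAdef
    set AF := (hAfin γ).toFinset with hAF
    set LF := (hLfin γ).toFinset with hLF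
    have step1 : (D hψ g).coeff γ = ∑ β ∈ AF, g.coeff β * tderivCoeff ψ β γ := by
      rw [D_coeff]
      refine finsum_eq_sum_of_support_subset _ ?_
      intro β hβ
      rw [Set.Finite.coe_toFinset]
      rw [Function.mem_support] at hβ
      exact ⟨hsuppg ((HahnSeries.mem_support _ _).2 fun h => hβ (by rw [h, zero_mul])),
        fun h => hβ (by rw [h, mul_zero])⟩
    have step2 : ∀ β ∈ AF, g.coeff β * tderivCoeff ψ β γ
        = ∑ l ∈ LF, (F l).coeff β * tderivCoeff ψ β γ := by
      intro β hβ
      rw [hg β, ← Finset.sum_mul]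
      congr 1
      refine finsum_eq_sum_of_support_subset _ ?_
      intro l hl
      rw [Set.Finite.coe_toFinset]
      rw [Function.mem_support] at hl
      rw [Set.Finite.mem_toFinset] at hβ
      exact Set.mem_biUnion hβ hl
    have step3 : (D hψ g).coeff γ = ∑ l ∈ LF, ∑ β ∈ AF, (F l).coeff β * tderivCoeff ψ β γ := by
      rw [step1, Finset.sum_congr rfl step2, Finset.sum_comm]
    have step4 : ∀ l, (D hψ (F l)).coeff γ = ∑ β ∈ AF, (F l).coeff β * tderivCoeff ψ β γ := by
      intro l
      rw [D_coeff]
      refine finsum_eq_sum_of_support_subset _ ?_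
      intro β hβ
      rw [Set.Finite.coe_toFinset]
      exact hDsupp l γ hβ
    have step5 : ∑ᶠ (l : ι), (D hψ (F l)).coeff γ = ∑ l ∈ LF, (D hψ (F l)).coeff γ := by
      refine finsum_eq_sum_of_support_subset _ ?_
      intro l hl
      rw [Set.Finite.coe_toFinset]
      exact hDlL γ l hl
    rw [step3, step5]
    exact Finset.sum_congr rfl fun l _ => (step4 l).symm

lemma D_add (hψ : IsHCoupleHahnType ψ) (f g : HahnSeries Γ' k) :
    D hψ (f + g) = D hψ f + D hψ g := by
  rw [← HahnSeries.coeff_inj]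
  funext γ
  rw [HahnSeries.coeff_add', Pi.add_apply, D_coeff, D_coeff, D_coeff]
  have : ∀ β : Γ', (f + g).coeff β * tderivCoeff ψ β γ
      = f.coeff β * tderivCoeff ψ β γ + g.coeff β * tderivCoeff ψ β γ := by
    intro β; rw [HahnSeries.coeff_add, add_mul]
  rw [finsum_congr this]
  exact finsum_add_distrib (support_term_finite hψ f γ) (support_term_finite hψ g γ)

lemma D_smul (hψ : IsHCoupleHahnType ψ) (c : k) (f : HahnSeries Γ' k) :
    D hψ (c • f) = c • D hψ f := by
  rw [← HahnSeries.coeff_inj]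
  funext γ
  rw [HahnSeries.coeff_smul, D_coeff, D_coeff, smul_eq_mul,
    mul_finsum _ c]
  refine finsum_congr fun β => ?_
  rw [HahnSeries.coeff_smul, smul_eq_mul, mul_assoc]

lemma tderivCoeff_zero_left (γ : Γ') : tderivCoeff ψ 0 γ = 0 := by
  rw [tderivCoeff]
  have : {i : I | i ∈ (0 : Γ').support ∧ (0:Γ') + ψ (HahnSeries.single i 1) = γ} = ∅ := by
    ext i
    simp [HahnSeries.support_zero]
  rw [this, finsum_mem_empty, neg_zero]

lemma D_C (hψ : IsHCoupleHahnType ψ) (c : k) : D hψ (HahnSeries.C c) = 0 := by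
  rw [← HahnSeries.coeff_inj]
  funext γ
  rw [D_coeff, HahnSeries.coeff_zero]
  refine finsum_eq_zero_of_forall_eq_zero fun β => ?_
  rcases eq_or_ne β 0 with rfl | hβ
  · rw [tderivCoeff_zero_left, mul_zero]
  · rw [HahnSeries.C_apply, HahnSeries.coeff_single_of_ne hβ, zero_mul]

/-- Leibniz rule on monomial derivative coefficients. -/
lemma tderivCoeff_add (hψ : IsHCoupleHahnType ψ) (β δ γ : Γ') :
    tderivCoeff ψ (β + δ) γ = tderivCoeff ψ β (γ - δ) + tderivCoeff ψ δ (γ - β) := by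
  by_cases h : ∃ i : I, γ = β + δ + ψ (e i)
  · obtain ⟨i, rfl⟩ := h
    have h1 : β + δ + ψ (e i) - δ = β + ψ (e i) := by abel
    have h2 : β + δ + ψ (e i) - β = δ + ψ (e i) := by abel
    rw [h1, h2, tderivCoeff_apply hψ, tderivCoeff_apply hψ, tderivCoeff_apply hψ,
      HahnSeries.coeff_add]
    ring
  · push_neg at h
    have hb : ∀ i, γ - δ ≠ β + ψ (e i) := by
      intro i hi
      have h2 := sub_eq_iff_eq_add.mp hi
      exact h i (by rw [h2]; abel)
    have hd : ∀ i, γ - β ≠ δ + ψ (e i) := by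
      intro i hi
      have h2 := sub_eq_iff_eq_add.mp hi
      exact h i (by rw [h2]; abel)
    rw [tderivCoeff_eq_zero _ _ h, tderivCoeff_eq_zero _ _ hb, tderivCoeff_eq_zero _ _ hd,
      add_zero]

lemma mul_support_pair_finite (x y : HahnSeries Γ' k) (γ : Γ') :
    (Function.support fun β => x.coeff β * y.coeff (γ - β)).Finite := by
  classical
  refine Set.Finite.subset (Set.finite_coe_iff.mp ?_ :
    (↑((Finset.antidiagonal x.isPWO_support y.isPWO_support γ).image Prod.fst) :
      Set Γ').Finite) ?_
  · exact Set.finite_coe_iff.mpr (Finset.finite_toSet _)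
  · intro β hβ
    rw [Function.mem_support] at hβ
    have hx : x.coeff β ≠ 0 := fun h => hβ (by rw [h, zero_mul])
    have hy : y.coeff (γ - β) ≠ 0 := fun h => hβ (by rw [h, mul_zero])
    rw [Finset.coe_image, Set.mem_image]
    refine ⟨(β, γ - β), ?_, rfl⟩
    rw [Finset.mem_coe, Finset.mem_antidiagonal]
    exact ⟨(HahnSeries.mem_support _ _).2 hx, (HahnSeries.mem_support _ _).2 hy, by rw [add_comm, sub_add_cancel]⟩

lemma mul_coeff_finsum (x y : HahnSeries Γ' k) (γ : Γ') :
    (x * y).coeff γ = ∑ᶠ β, x.coeff β * y.coeff (γ - β) := by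
  classical
  rw [HahnSeries.coeff_mul]
  set AD := Finset.antidiagonal x.isPWO_support y.isPWO_support γ with hAD
  have hsub : (Function.support fun β => x.coeff β * y.coeff (γ - β))
      ⊆ ↑(AD.image Prod.fst) := by
    intro β hβ
    rw [Function.mem_support] at hβ
    have hx : x.coeff β ≠ 0 := fun h => hβ (by rw [h, zero_mul])
    have hy : y.coeff (γ - β) ≠ 0 := fun h => hβ (by rw [h, mul_zero])
    rw [Finset.coe_image, Set.mem_image]
    refine ⟨(β, γ - β), ?_, rfl⟩
    rw [Finset.mem_coe, hAD, Finset.mem_antidiagonal]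
    exact ⟨(HahnSeries.mem_support _ _).2 hx, (HahnSeries.mem_support _ _).2 hy, by rw [add_comm, sub_add_cancel]⟩
  rw [finsum_eq_sum_of_support_subset _ hsub]
  rw [Finset.sum_image ?_]
  · refine Finset.sum_congr rfl fun p hp => ?_
    rw [hAD, Finset.mem_antidiagonal] at hp
    have : γ - p.1 = p.2 := by rw [← hp.2.2, add_sub_cancel_left]
    rw [this]
  · intro p hp q hq hpq
    rw [Finset.mem_coe, hAD, Finset.mem_antidiagonal] at hp hq
    refine Prod.ext hpq ?_
    have h1 : p.2 = γ - p.1 := by rw [← hp.2.2, add_sub_cancel_left]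
    have h2 : q.2 = γ - q.1 := by rw [← hq.2.2, add_sub_cancel_left]
    rw [h1, h2, hpq]

lemma D_mul (hψ : IsHCoupleHahnType ψ) (f g : HahnSeries Γ' k) :
    D hψ (f * g) = f * D hψ g + g * D hψ f := by
  classical
  rw [← HahnSeries.coeff_inj]
  funext γ
  set F1 : Γ' × Γ' → k :=
    fun p => f.coeff p.1 * (g.coeff p.2 * tderivCoeff ψ (p.1 + p.2) γ) with hF1
  set F2 : Γ' × Γ' → k :=
    fun p => f.coeff p.1 * (g.coeff p.2 * tderivCoeff ψ p.2 (γ - p.1)) with hF2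
  set F3 : Γ' × Γ' → k :=
    fun p => f.coeff p.1 * (g.coeff p.2 * tderivCoeff ψ p.1 (γ - p.2)) with hF3
  have hF2fin : (Function.support F2).Finite := by
    refine Set.Finite.subset (finite_pairs hψ f.isWF_support g.isWF_support γ) ?_
    intro p hp
    rw [Function.mem_support, hF2] at hp
    refine ⟨(HahnSeries.mem_support _ _).2 fun h => hp ?_, (HahnSeries.mem_support _ _).2
      fun h => hp ?_, fun h => hp ?_⟩ <;> simp [h]
  have hF3fin : (Function.support F3).Finite := by
    refine Set.Finite.subset ((finite_pairs hψ g.isWF_support f.isWF_support γ).image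
      Prod.swap) ?_
    intro p hp
    rw [Function.mem_support, hF3] at hp
    refine ⟨(p.2, p.1), ⟨(HahnSeries.mem_support _ _).2 fun h => hp ?_,
      (HahnSeries.mem_support _ _).2 fun h => hp ?_, fun h => hp ?_⟩, rfl⟩ <;> simp [h]
  have hpt : ∀ p : Γ' × Γ', F1 p = F2 p + F3 p := by
    intro p
    rw [hF1, hF2, hF3]
    simp only []
    rw [tderivCoeff_add hψ p.1 p.2 γ]
    ring
  have hF1fin : (Function.support F1).Finite := by
    refine Set.Finite.subset (hF2fin.union hF3fin) ?_
    intro p hp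
    rw [Function.mem_support, hpt p] at hp
    rcases eq_or_ne (F2 p) 0 with h2 | h2
    · exact Or.inr (fun h3 => hp (by rw [h2, h3, add_zero]))
    · exact Or.inl h2
  have hL2 : (f * D hψ g).coeff γ = ∑ᶠ p : Γ' × Γ', F2 p := by
    rw [mul_coeff_finsum]
    calc ∑ᶠ β, f.coeff β * (D hψ g).coeff (γ - β)
        = ∑ᶠ β, ∑ᶠ δ, F2 (β, δ) := by
          refine finsum_congr fun β => ?_
          rw [D_coeff, mul_finsum _ _]
      _ = ∑ᶠ p : Γ' × Γ', F2 p := (finsum_curry F2 hF2fin).symm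
  have hL3 : (g * D hψ f).coeff γ = ∑ᶠ p : Γ' × Γ', F3 p := by
    rw [mul_coeff_finsum]
    set G : Γ' × Γ' → k :=
      fun q => g.coeff q.1 * (f.coeff q.2 * tderivCoeff ψ q.2 (γ - q.1)) with hG
    have hGfin : (Function.support G).Finite := by
      refine Set.Finite.subset (finite_pairs hψ g.isWF_support f.isWF_support γ) ?_
      intro p hp
      rw [Function.mem_support, hG] at hp
      refine ⟨(HahnSeries.mem_support _ _).2 fun h => hp ?_, (HahnSeries.mem_support _ _).2
        fun h => hp ?_, fun h => hp ?_⟩ <;> simp [h]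
    calc ∑ᶠ β, g.coeff β * (D hψ f).coeff (γ - β)
        = ∑ᶠ β, ∑ᶠ δ, G (β, δ) := by
          refine finsum_congr fun β => ?_
          rw [D_coeff, mul_finsum _ _]
      _ = ∑ᶠ q : Γ' × Γ', G q := (finsum_curry G hGfin).symm
      _ = ∑ᶠ p : Γ' × Γ', G ((Equiv.prodComm Γ' Γ') p) :=
          (finsum_comp_equiv (Equiv.prodComm Γ' Γ')).symm
      _ = ∑ᶠ p : Γ' × Γ', F3 p := by
          refine finsum_congr fun p => ?_
          rw [hG, hF3]
          simp only [Equiv.prodComm_apply, Prod.fst_swap, Prod.snd_swap]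
          ring
  have hE : ∀ p : Γ' × Γ', ((p.1 + p.2 : Γ'), p.1).2 = p.1 := fun p => rfl
  let E : (Γ' × Γ') ≃ (Γ' × Γ') :=
    { toFun := fun p => (p.1 + p.2, p.1)
      invFun := fun p => (p.2, p.1 - p.2)
      left_inv := by
        intro p
        refine Prod.ext rfl ?_
        simp only []
        rw [add_sub_cancel_left]
      right_inv := by
        intro p
        refine Prod.ext ?_ rfl
        simp only []
        rw [add_comm, sub_add_cancel] }
  have hL1 : (D hψ (f * g)).coeff γ = ∑ᶠ p : Γ' × Γ', F1 p := by
    rw [D_coeff]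
    set H : Γ' × Γ' → k :=
      fun p => f.coeff p.2 * (g.coeff (p.1 - p.2) * tderivCoeff ψ p.1 γ) with hH
    have hHfin : (Function.support H).Finite := by
      refine Set.Finite.subset (hF1fin.image E) ?_
      intro p hp
      rw [Function.mem_support, hH] at hp
      refine ⟨(p.2, p.1 - p.2), ?_, ?_⟩
      · rw [Function.mem_support, hF1]
        simp only []
        rw [add_comm, sub_add_cancel]  -- fix the first coordinate p.2 + (p.1 - p.2) = p.1
        exact fun h => hp (by rw [← h])
      · show ((p.2 + (p.1 - p.2) : Γ'), p.2) = p
        refine Prod.ext ?_ rfl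
        simp only []
        rw [add_comm, sub_add_cancel]
    calc ∑ᶠ α, (f * g).coeff α * tderivCoeff ψ α γ
        = ∑ᶠ α, ∑ᶠ β, H (α, β) := by
          refine finsum_congr fun α => ?_
          rw [mul_coeff_finsum f g α, finsum_mul _ _]
          refine finsum_congr fun β => ?_
          rw [hH]; ring
      _ = ∑ᶠ p : Γ' × Γ', H p := (finsum_curry H hHfin).symm
      _ = ∑ᶠ p : Γ' × Γ', H (E p) := (finsum_comp_equiv E).symm
      _ = ∑ᶠ p : Γ' × Γ', F1 p := by
          refine finsum_congr fun p => ?_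
          rw [hH, hF1]
          show f.coeff (p.1 + p.2, p.1).2 * (g.coeff ((p.1 + p.2, p.1).1 - (p.1 + p.2, p.1).2)
            * tderivCoeff ψ (p.1 + p.2, p.1).1 γ) = _
          simp only []
          rw [add_sub_cancel_left]
  rw [HahnSeries.coeff_add, hL1, hL2, hL3, finsum_congr hpt,
    finsum_add_distrib hF2fin hF3fin]

end HahnDeriv

/-- Let `(Γ, ψ)`, `Γ := H[I,k]`, be an H-couple over `k` of Hahn type and
`K := k((t^Γ))`.  Setting `(t^α)' := -∑_{i ∈ supp α} α_i t^{α + ψ(e_i)}` (an element `T α` of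
`K`), for every `f = ∑_α f_α t^α ∈ K` the family `(f_α (t^α)')_{α ∈ supp f}` is summable, and
`f ↦ f' := ∑_α f_α (t^α)'` is a strongly additive `k`-linear map `K → K` satisfying the Leibniz
rule and vanishing on `k`. -/
theorem hahnField_derivation (ψ : HahnSeries I k → HahnSeries I k)
    (hψ : IsHCoupleHahnType ψ) :
    ∃ T : HahnSeries I k → HahnSeries (HahnSeries I k) k,
      (∀ α γ : HahnSeries I k, (T α).coeff γ = tderivCoeff ψ α γ) ∧
      ∃ D : HahnSeries (HahnSeries I k) k → HahnSeries (HahnSeries I k) k,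
        -- for each `f` the family `(f_α (t^α)')_{α ∈ supp f}` is summable, with sum `D f = f'`:
        (∀ f : HahnSeries (HahnSeries I k) k,
          HSummable (fun α : f.support => f.coeff ↑α • T ↑α) ∧
          HIsSum (fun α : f.support => f.coeff ↑α • T ↑α) (D f)) ∧
        -- `D` is strongly additive:
        (∀ {ι : Type*} (F : ι → HahnSeries (HahnSeries I k) k)
            (g : HahnSeries (HahnSeries I k) k),
          HSummable F → HIsSum F g →
            HSummable (fun l => D (F l)) ∧ HIsSum (fun l => D (F l)) (D g)) ∧
        -- `D` is `k`-linear: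
        (∀ f g : HahnSeries (HahnSeries I k) k, D (f + g) = D f + D g) ∧
        (∀ (c : k) (f : HahnSeries (HahnSeries I k) k), D (c • f) = c • D f) ∧
        -- `D` satisfies the Leibniz rule:
        (∀ f g : HahnSeries (HahnSeries I k) k, D (f * g) = f * D g + g * D f) ∧
        -- `D` vanishes on the constants `k`:
        (∀ c : k, D (HahnSeries.C c) = 0) := by
  classical
  refine ⟨HahnDeriv.T hψ, fun α γ => HahnDeriv.T_coeff hψ α γ, HahnDeriv.D hψ,
    fun f => HahnDeriv.part1 hψ f, ?_, fun f g => HahnDeriv.D_add hψ f g,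
    fun c f => HahnDeriv.D_smul hψ c f, fun f g => HahnDeriv.D_mul hψ f g,
    fun c => HahnDeriv.D_C hψ c⟩
  intro ι F g hF hg
  exact HahnDeriv.part2 hψ F g hF hg
end

section
/- Let (Γ, ψ) be an H-asymptotic couple (an asymptotic couple with ψ(α) ≥ ψ(β) whenever 0 < α ≤ β), and let Γ* be an ordered vector space over ℝ containing Γ as an ordered subgroup such that every nonzero element of Γ* has the same archimedean class as some nonzero element of Γ ([Γ] = [Γ*]). Then there is a unique map ψ* : Γ* \ {0} → Γ* extending ψ which makes (Γ*, ψ*) an H-asymptotic couple. Moreover (Γ*, ψ*) is an H-couple over ℝ, and (Γ*, ψ*) is of Hahn type if and only if (Γ, ψ) is of Hardy type. -/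
section
variable {Γ : Type*} [AddCommGroup Γ] [LinearOrder Γ] [IsOrderedAddMonoid Γ]

/-- `(G, ψ)` is an *H-asymptotic couple* (with `G` a set of elements of an ambient linearly
ordered abelian group):  `ψ` maps nonzero elements of `G` into `G` and satisfies, for all
nonzero `α, β ∈ G`:  (A1) `ψ(α+β) ≥ min (ψ α) (ψ β)` if `α+β ≠ 0`;  (A2) `ψ(nα) = ψ(α)` for
nonzero integers `n`;  (A3) `α + ψ(α) > ψ(β)` if `α > 0`;  and `ψ(α) ≥ ψ(β)` whenever
`0 < α ≤ β`. -/
def IsHAsympCoupleOn (G : Set Γ) (ψ : Γ → Γ) : Prop :=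
  (∀ α ∈ G, α ≠ 0 → ψ α ∈ G) ∧
  (∀ α ∈ G, ∀ β ∈ G, α ≠ 0 → β ≠ 0 → α + β ≠ 0 → min (ψ α) (ψ β) ≤ ψ (α + β)) ∧
  (∀ α ∈ G, ∀ n : ℤ, α ≠ 0 → n ≠ 0 → ψ (n • α) = ψ α) ∧
  (∀ α ∈ G, ∀ β ∈ G, β ≠ 0 → 0 < α → ψ β < α + ψ α) ∧
  (∀ α ∈ G, ∀ β ∈ G, 0 < α → α ≤ β → ψ β ≤ ψ α)

/-- `[α] ≤ [β]`:  comparison of archimedean classes. -/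
def ArchLE (α β : Γ) : Prop := ∃ n : ℕ, 0 < n ∧ |α| ≤ n • |β|

/-- `(G, ψ)` is of *Hardy type*:  for all nonzero `α, β ∈ G`, `ψ(α) > ψ(β)` iff `n|α| < |β|`
for every positive integer `n`. -/
def IsHardyTypeOn (G : Set Γ) (ψ : Γ → Γ) : Prop :=
  ∀ α ∈ G, ∀ β ∈ G, α ≠ 0 → β ≠ 0 →
    (ψ β < ψ α ↔ ∀ n : ℕ, 0 < n → n • |α| < |β|)

end

section
variable (k : Type*) [Field k] [LinearOrder k] [IsStrictOrderedRing k] {Γ : Type*}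
  [AddCommGroup Γ] [LinearOrder Γ] [IsOrderedAddMonoid Γ]
  [Module k Γ]

/-- `(G, ψ)` is an *H-couple over `k`*:  an H-asymptotic couple with `Γ` an ordered `k`-vector
space and `ψ(cα) = ψ(α)` for all nonzero `c ∈ k` and nonzero `α`. -/
def IsHCoupleOn (G : Set Γ) (ψ : Γ → Γ) : Prop :=
  IsHAsympCoupleOn G ψ ∧ ∀ α ∈ G, ∀ c : k, α ≠ 0 → c ≠ 0 → ψ (c • α) = ψ α

/-- `(G, ψ)` is of *Hahn type*: for all nonzero `α, β ∈ G` with `ψ(α) = ψ(β)` there is a nonzero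
`c ∈ k` with `α - cβ = 0` or `ψ(α - cβ) > ψ(α)`. -/
def IsHahnTypeOn (G : Set Γ) (ψ : Γ → Γ) : Prop :=
  ∀ α ∈ G, ∀ β ∈ G, α ≠ 0 → β ≠ 0 → ψ α = ψ β →
    ∃ c : k, c ≠ 0 ∧ (α - c • β = 0 ∨ ψ α < ψ (α - c • β))

end

/- ### Auxiliary lemmas -/


section AuxArch
variable {Γ : Type*} [AddCommGroup Γ] [LinearOrder Γ] [IsOrderedAddMonoid Γ]

theorem archLE_trans' {a b c : Γ} (h1 : ArchLE a b) (h2 : ArchLE b c) : ArchLE a c := by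
  obtain ⟨n, hn, h1⟩ := h1
  obtain ⟨m, hm, h2⟩ := h2
  refine ⟨n * m, Nat.mul_pos hn hm, ?_⟩
  calc |a| ≤ n • |b| := h1
    _ ≤ n • (m • |c|) := nsmul_le_nsmul_right h2 n
    _ = (n * m) • |c| := by rw [mul_comm, mul_nsmul]

theorem archLE_total' (a b : Γ) : ArchLE a b ∨ ArchLE b a := by
  rcases le_total |a| |b| with h | h
  · exact Or.inl ⟨1, one_pos, by simpa using h⟩
  · exact Or.inr ⟨1, one_pos, by simpa using h⟩

theorem not_archLE_iff {a b : Γ} : ¬ ArchLE a b ↔ ∀ n : ℕ, 0 < n → n • |b| < |a| := by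
  unfold ArchLE
  push_neg
  rfl

theorem psi_abs {G : Set Γ} {ψ : Γ → Γ} (h : IsHAsympCoupleOn G ψ)
    (hneg : ∀ a ∈ G, -a ∈ G) {x : Γ} (hx : x ∈ G) (hx0 : x ≠ 0) :
    ψ |x| = ψ x ∧ |x| ∈ G := by
  rcases abs_choice x with h' | h'
  · rw [h']; exact ⟨rfl, hx⟩
  · rw [h']
    refine ⟨?_, hneg x hx⟩
    have := h.2.2.1 x hx (-1) hx0 (by norm_num)
    simpa using this

theorem psi_anti {G : Set Γ} {ψ : Γ → Γ} (h : IsHAsympCoupleOn G ψ)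
    (hneg : ∀ a ∈ G, -a ∈ G) (hns : ∀ a ∈ G, ∀ n : ℕ, n • a ∈ G)
    {a b : Γ} (ha : a ∈ G) (hb : b ∈ G) (ha0 : a ≠ 0) (hb0 : b ≠ 0)
    (hle : ArchLE b a) : ψ a ≤ ψ b := by
  obtain ⟨n, hn, hba⟩ := hle
  obtain ⟨hψa, haG⟩ := psi_abs h hneg ha ha0
  obtain ⟨hψb, hbG⟩ := psi_abs h hneg hb hb0
  have ha0' : (0 : Γ) < |a| := abs_pos.2 ha0
  have hb0' : (0 : Γ) < |b| := abs_pos.2 hb0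
  have hnA : ψ (n • |a|) = ψ |a| := by
    have := h.2.2.1 |a| haG (n : ℤ) (ne_of_gt ha0') (by exact_mod_cast hn.ne')
    rwa [natCast_zsmul] at this
  have hkey : ψ (n • |a|) ≤ ψ |b| :=
    h.2.2.2.2 |b| hbG (n • |a|) (hns |a| haG n) hb0' hba
  rw [hnA, hψa, hψb] at hkey
  exact hkey

theorem psi_eq {G : Set Γ} {ψ : Γ → Γ} (h : IsHAsympCoupleOn G ψ)
    (hneg : ∀ a ∈ G, -a ∈ G) (hns : ∀ a ∈ G, ∀ n : ℕ, n • a ∈ G)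
    {a b : Γ} (ha : a ∈ G) (hb : b ∈ G) (ha0 : a ≠ 0) (hb0 : b ≠ 0)
    (h1 : ArchLE a b) (h2 : ArchLE b a) : ψ a = ψ b :=
  le_antisymm (psi_anti h hneg hns ha hb ha0 hb0 h2)
    (psi_anti h hneg hns hb ha hb0 ha0 h1)

end AuxArch

section AuxReal
variable {Γ : Type*} [AddCommGroup Γ] [LinearOrder Γ] [IsOrderedAddMonoid Γ] [Module ℝ Γ]
variable (hs : ∀ (c : ℝ) (x : Γ), 0 < c → 0 < x → 0 < c • x)

include hs

theorem rsmul_nonneg {c : ℝ} {x : Γ} (hc : 0 ≤ c) (hx : 0 ≤ x) : 0 ≤ c • x := by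
  rcases hc.eq_or_lt with rfl | hc
  · simp
  rcases hx.eq_or_lt with rfl | hx
  · simp
  exact (hs c x hc hx).le

theorem rsmul_le_left {c : ℝ} {x y : Γ} (hc : 0 ≤ c) (h : x ≤ y) : c • x ≤ c • y := by
  have := rsmul_nonneg hs hc (sub_nonneg.2 h)
  rw [smul_sub] at this
  exact sub_nonneg.1 this

theorem rsmul_lt_left {c : ℝ} {x y : Γ} (hc : 0 < c) (h : x < y) : c • x < c • y := by
  have := hs c (y - x) hc (sub_pos.2 h)
  rw [smul_sub] at this
  exact sub_pos.1 this

theorem rsmul_le_right {c d : ℝ} {x : Γ} (hx : 0 ≤ x) (h : c ≤ d) : c • x ≤ d • x := by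
  have := rsmul_nonneg hs (sub_nonneg.2 h) hx
  rw [sub_smul] at this
  exact sub_nonneg.1 this

theorem rsmul_cancel {c d : ℝ} {y : Γ} (hy : 0 < y) (h : c • y ≤ d • y) : c ≤ d := by
  by_contra hcd
  push_neg at hcd
  have := hs (c - d) y (sub_pos.2 hcd) hy
  rw [sub_smul] at this
  exact absurd h (not_le.2 (sub_pos.1 this))

theorem rabs_smul (c : ℝ) (x : Γ) : |c • x| = |c| • |x| := by
  have h1 : ∀ (c : ℝ) (x : Γ), 0 ≤ c → |c • x| = c • |x| := by
    intro c x hc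
    rcases le_or_gt 0 x with hx | hx
    · rw [abs_of_nonneg hx, abs_of_nonneg (rsmul_nonneg hs hc hx)]
    · have h2 : c • x ≤ 0 := by
        have := rsmul_nonneg hs hc (neg_nonneg.2 hx.le)
        rw [smul_neg] at this
        exact neg_nonneg.1 this
      rw [abs_of_neg hx, abs_of_nonpos h2, smul_neg]
  rcases le_or_gt 0 c with hc | hc
  · rw [abs_of_nonneg hc, h1 c x hc]
  · rw [abs_of_neg hc, ← abs_neg (c • x), ← neg_smul, h1 (-c) x (by linarith)]

omit hs in
theorem nsmul_eq_rsmul (n : ℕ) (x : Γ) : n • x = ((n : ℝ)) • x :=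
  (Nat.cast_smul_eq_nsmul ℝ n x).symm

theorem exists_real_coeff_pos {x y : Γ} (hy : 0 < y)
    (h1 : ArchLE x y) (h2 : ArchLE y x) :
    ∃ c : ℝ, c ≠ 0 ∧ (x - c • y = 0 ∨ (x - c • y ≠ 0 ∧ ¬ ArchLE y (x - c • y))) := by
  obtain ⟨n, hn, hxy⟩ := h1
  obtain ⟨m, hm, hyx⟩ := h2
  have hay : |y| = y := abs_of_pos hy
  rw [hay] at hxy hyx
  set S : Set ℝ := {r : ℝ | r • y ≤ x} with hS
  have hSne : S.Nonempty := by
    refine ⟨-(n : ℝ), ?_⟩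
    have : -(n • y) ≤ x := neg_le_of_abs_le hxy
    rwa [nsmul_eq_rsmul, ← neg_smul] at this
  have hSbdd : BddAbove S := by
    refine ⟨(n : ℝ), fun r hr => ?_⟩
    have hrx : r • y ≤ (n : ℝ) • y := by
      rw [← nsmul_eq_rsmul]
      exact hr.trans ((le_abs_self x).trans hxy)
    exact rsmul_cancel hs hy hrx
  set c : ℝ := sSup S with hc
  have hx0 : x ≠ 0 := by
    rintro rfl
    simp at hyx
    exact absurd hyx (not_le.2 hy)
  have hminv : ((m : ℝ))⁻¹ * m = 1 := inv_mul_cancel₀ (by exact_mod_cast hm.ne')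
  have hc0 : c ≠ 0 := by
    rcases hx0.lt_or_gt with hx | hx
    · have hxabs : y ≤ m • (-x) := by rwa [← abs_of_neg hx]
      have hub : ∀ r ∈ S, r ≤ -((m : ℝ))⁻¹ := by
        intro r hr
        have h3 : ((m : ℝ))⁻¹ • y ≤ -x := by
          have := rsmul_le_left hs (by positivity : (0:ℝ) ≤ ((m:ℝ))⁻¹) hxabs
          rwa [nsmul_eq_rsmul, smul_smul, hminv, one_smul] at this
        have h4 : r • y ≤ (-((m : ℝ))⁻¹) • y := by
          rw [neg_smul]
          exact hr.trans (le_neg_of_le_neg h3)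
        exact rsmul_cancel hs hy h4
      have hle : c ≤ -((m:ℝ))⁻¹ := csSup_le hSne hub
      intro h; rw [h] at hle
      have : (0:ℝ) < ((m:ℝ))⁻¹ := by positivity
      linarith
    · have hxabs : y ≤ m • x := by rwa [← abs_of_pos hx]
      have hmem : ((m : ℝ))⁻¹ ∈ S := by
        have := rsmul_le_left hs (by positivity : (0:ℝ) ≤ ((m:ℝ))⁻¹) hxabs
        rwa [nsmul_eq_rsmul, smul_smul, hminv, one_smul] at this
      have hle : ((m:ℝ))⁻¹ ≤ c := le_csSup hSbdd hmem
      intro h; rw [h] at hle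
      have : (0:ℝ) < ((m:ℝ))⁻¹ := by positivity
      linarith
  refine ⟨c, hc0, ?_⟩
  set z := x - c • y with hz
  rcases eq_or_ne z 0 with hz0 | hz0
  · exact Or.inl hz0
  refine Or.inr ⟨hz0, ?_⟩
  rintro ⟨k, hk, hyz⟩
  rw [hay] at hyz
  have hkinv : ((k : ℝ))⁻¹ * k = 1 := inv_mul_cancel₀ (by exact_mod_cast hk.ne')
  have hky : ((k : ℝ))⁻¹ • y ≤ |z| := by
    have := rsmul_le_left hs (by positivity : (0:ℝ) ≤ ((k:ℝ))⁻¹) hyz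
    rwa [nsmul_eq_rsmul, smul_smul, hkinv, one_smul] at this
  have hkpos : (0:ℝ) < ((k:ℝ))⁻¹ := by positivity
  rcases hz0.lt_or_gt with hzneg | hzpos
  · rw [abs_of_neg hzneg, hz, neg_sub] at hky
    have hub : ∀ r ∈ S, r ≤ c - ((k:ℝ))⁻¹ := by
      intro r hr
      have hxle : x ≤ c • y - ((k:ℝ))⁻¹ • y := le_sub_comm.1 hky
      have : r • y ≤ (c - ((k:ℝ))⁻¹) • y := by
        rw [sub_smul]
        exact hr.trans hxle
      exact rsmul_cancel hs hy this
    have h4 : c ≤ c - ((k:ℝ))⁻¹ := csSup_le hSne hub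
    linarith
  · rw [abs_of_pos hzpos, hz] at hky
    have hmem : c + ((k:ℝ))⁻¹ ∈ S := by
      rw [hS, Set.mem_setOf_eq, add_smul, add_comm]
      exact add_le_of_le_sub_right hky
    have h4 : c + ((k:ℝ))⁻¹ ≤ c := le_csSup hSbdd hmem
    linarith

theorem exists_real_coeff {x y : Γ} (hy : y ≠ 0)
    (h1 : ArchLE x y) (h2 : ArchLE y x) :
    ∃ c : ℝ, c ≠ 0 ∧ (x - c • y = 0 ∨ (x - c • y ≠ 0 ∧ ¬ ArchLE y (x - c • y))) := by
  rcases hy.lt_or_gt with hyn | hyp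
  · have h1' : ArchLE x (-y) := by obtain ⟨n, hn, h⟩ := h1; exact ⟨n, hn, by rwa [abs_neg]⟩
    have h2' : ArchLE (-y) x := by obtain ⟨n, hn, h⟩ := h2; exact ⟨n, hn, by rwa [abs_neg]⟩
    obtain ⟨c, hc0, hc⟩ := exists_real_coeff_pos hs (neg_pos.2 hyn) h1' h2'
    refine ⟨-c, neg_ne_zero.2 hc0, ?_⟩
    have hxy : x - (-c) • y = x - c • (-y) := by rw [neg_smul, smul_neg]
    rw [hxy]
    rcases hc with h | ⟨h, h'⟩
    · exact Or.inl h
    · refine Or.inr ⟨h, fun hcon => h' ?_⟩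
      obtain ⟨n', hn', hh⟩ := hcon
      exact ⟨n', hn', by rwa [abs_neg]⟩
  · exact exists_real_coeff_pos hs hyp h1 h2

end AuxReal

/-- Let `(Γ, ψ)` be an H-asymptotic couple and `Γ*` an ordered real vector
space containing `Γ` as an ordered subgroup with `[Γ] = [Γ*]`.  Then there is a unique map `ψ*`
on `Γ* \ {0}` extending `ψ` which makes `(Γ*, ψ*)` an H-asymptotic couple.  Moreover `(Γ*, ψ*)`
is an H-couple over `ℝ`, and `(Γ*, ψ*)` is of Hahn type iff `(Γ, ψ)` is of Hardy type. -/
theorem exists_unique_hasymp_extension_real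
    {Γs : Type*} [AddCommGroup Γs] [LinearOrder Γs] [IsOrderedAddMonoid Γs] [Module ℝ Γs]
    (hsmul : ∀ (c : ℝ) (x : Γs), 0 < c → 0 < x → 0 < c • x)
    (G : AddSubgroup Γs) (ψ : Γs → Γs)
    (hψ : IsHAsympCoupleOn (G : Set Γs) ψ)
    (harch : ∀ x : Γs, x ≠ 0 → ∃ y ∈ G, y ≠ 0 ∧ ArchLE x y ∧ ArchLE y x) :
    ∃ ψs : Γs → Γs,
      ((∀ x ∈ G, x ≠ 0 → ψs x = ψ x) ∧ IsHAsympCoupleOn (Set.univ : Set Γs) ψs) ∧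
      (∀ ψs' : Γs → Γs,
        ((∀ x ∈ G, x ≠ 0 → ψs' x = ψ x) ∧ IsHAsympCoupleOn (Set.univ : Set Γs) ψs') →
        ∀ x : Γs, x ≠ 0 → ψs' x = ψs x) ∧
      IsHCoupleOn ℝ (Set.univ : Set Γs) ψs ∧
      (IsHahnTypeOn ℝ (Set.univ : Set Γs) ψs ↔ IsHardyTypeOn (G : Set Γs) ψ) := by
  classical
  have hnegG : ∀ a ∈ (G : Set Γs), -a ∈ (G : Set Γs) := fun a ha => G.neg_mem ha
  have hnsG : ∀ a ∈ (G : Set Γs), ∀ n : ℕ, n • a ∈ (G : Set Γs) := fun a ha n =>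
    G.nsmul_mem ha n
  set φ : ∀ x : Γs, x ≠ 0 → Γs := fun x hx => (harch x hx).choose with hφdef
  have hφ : ∀ (x : Γs) (hx : x ≠ 0),
      φ x hx ∈ (G : Set Γs) ∧ φ x hx ≠ 0 ∧ ArchLE x (φ x hx) ∧ ArchLE (φ x hx) x := by
    intro x hx
    obtain ⟨h1, h2, h3, h4⟩ := (harch x hx).choose_spec
    exact ⟨h1, h2, h3, h4⟩
  set ψs : Γs → Γs := fun x => if hx : x ≠ 0 then ψ (φ x hx) else 0 with hψsdef
  have hval : ∀ (x : Γs) (hx : x ≠ 0), ψs x = ψ (φ x hx) := by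
    intro x hx
    simp only [hψsdef, dif_pos hx]
  -- extension property
  have hext : ∀ x ∈ (G : Set Γs), x ≠ 0 → ψs x = ψ x := by
    intro x hxG hx0
    rw [hval x hx0]
    obtain ⟨h1, h2, h3, h4⟩ := hφ x hx0
    exact psi_eq hψ hnegG hnsG h1 hxG h2 hx0 h4 h3
  -- monotone w.r.t. archimedean comparison
  have hM : ∀ (x x' : Γs) (hx : x ≠ 0) (hx' : x' ≠ 0),
      ArchLE x' x → ψs x ≤ ψs x' := by
    intro x x' hx hx' hle
    obtain ⟨h1, h2, h3, h4⟩ := hφ x hx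
    obtain ⟨h1', h2', h3', h4'⟩ := hφ x' hx'
    rw [hval x hx, hval x' hx']
    exact psi_anti hψ hnegG hnsG h1 h1' h2 h2'
      (archLE_trans' h4' (archLE_trans' hle h3))
  have hMeq : ∀ (x x' : Γs) (hx : x ≠ 0) (hx' : x' ≠ 0),
      ArchLE x x' → ArchLE x' x → ψs x = ψs x' := by
    intro x x' hx hx' h1 h2
    exact le_antisymm (hM x x' hx hx' h2) (hM x' x hx' hx h1)
  -- the couple structure on the whole space
  have hcouple : IsHAsympCoupleOn (Set.univ : Set Γs) ψs := by
    refine ⟨fun _ _ _ => trivial, ?_, ?_, ?_, ?_⟩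
    · -- A1
      have key : ∀ u v : Γs, u ≠ 0 → v ≠ 0 → u + v ≠ 0 → ArchLE v u →
          min (ψs u) (ψs v) ≤ ψs (u + v) := by
        intro u v hu hv huv ⟨n, hn, hvu⟩
        have harch1 : ArchLE (u + v) u := by
          refine ⟨n + 1, Nat.succ_pos n, ?_⟩
          calc |u + v| ≤ |u| + |v| := abs_add_le u v
            _ ≤ |u| + n • |u| := add_le_add_right hvu _
            _ = (n + 1) • |u| := by rw [add_comm (|u|), succ_nsmul]
        calc min (ψs u) (ψs v) ≤ ψs u := min_le_left _ _
          _ ≤ ψs (u + v) := hM u (u + v) hu huv harch1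
      intro x _ y _ hx0 hy0 hxy0
      rcases archLE_total' x y with h | h
      · rw [min_comm, add_comm]
        exact key y x hy0 hx0 (by rwa [add_comm]) h
      · exact key x y hx0 hy0 hxy0 h
    · -- A2 (integer scaling)
      intro x _ n hx0 hn0
      have habs : |n • x| = n.natAbs • |x| := by
        rw [abs_zsmul, Int.abs_eq_natAbs, natCast_zsmul]
      have hna : 1 ≤ n.natAbs := Nat.one_le_iff_ne_zero.2 (Int.natAbs_ne_zero.2 hn0)
      have hxle : |x| ≤ |n • x| := by
        rw [habs]
        calc |x| = 1 • |x| := (one_nsmul _).symm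
          _ ≤ n.natAbs • |x| := nsmul_le_nsmul_left (abs_nonneg x) hna
      have hnx0 : n • x ≠ 0 := by
        intro h
        rw [h, abs_zero] at hxle
        exact hx0 (abs_nonpos_iff.1 hxle)
      exact hMeq (n • x) x hnx0 hx0 ⟨n.natAbs, hna, le_of_eq habs⟩
        ⟨1, one_pos, by rwa [one_nsmul]⟩
    · -- A3
      intro x _ y _ hy0 hx
      have hx0 : x ≠ 0 := ne_of_gt hx
      obtain ⟨haG, ha0, hxa, hax⟩ := hφ x hx0
      obtain ⟨hbG, hb0, hyb, hby⟩ := hφ y hy0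
      rw [hval x hx0, hval y hy0]
      set a := φ x hx0
      set b := φ y hy0
      rcases le_or_gt (ψ b) (ψ a) with hle | hlt
      · calc ψ b ≤ ψ a := hle
          _ < x + ψ a := lt_add_of_pos_left _ hx
      · have hψaG : ψ a ∈ (G : Set Γs) := hψ.1 a haG ha0
        have hψbG : ψ b ∈ (G : Set Γs) := hψ.1 b hbG hb0
        set δ := ψ b - ψ a with hδ
        have hδG : δ ∈ (G : Set Γs) := G.sub_mem hψbG hψaG
        have hδpos : 0 < δ := sub_pos.2 hlt
        have hδ0 : δ ≠ 0 := ne_of_gt hδpos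
        obtain ⟨n, hn, hax'⟩ := hax
        rw [abs_of_pos hx] at hax'
        obtain ⟨hψabsa, habsaG⟩ := psi_abs hψ hnegG haG ha0
        have hnd : n • δ < |a| := by
          by_contra hcon
          push_neg at hcon
          have h1 : ψ (n • δ) ≤ ψ |a| :=
            hψ.2.2.2.2 |a| habsaG (n • δ) (hnsG δ hδG n) (abs_pos.2 ha0) hcon
          have h2 : ψ (n • δ) = ψ δ := by
            have := hψ.2.2.1 δ hδG (n : ℤ) hδ0 (by exact_mod_cast hn.ne')
            rwa [natCast_zsmul] at this
          have h3 : ψ b < δ + ψ δ := hψ.2.2.2.1 δ hδG b hbG hb0 hδpos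
          have h4 : ψ δ ≤ ψ a := by
            rw [← h2]
            exact h1.trans_eq hψabsa
          have h5 : ψ b < δ + ψ a := h3.trans_le (add_le_add_right h4 δ)
          rw [hδ, sub_add_cancel] at h5
          exact lt_irrefl _ h5
        have hδx : δ < x := by
          by_contra hcon
          push_neg at hcon
          have : n • x ≤ n • δ := nsmul_le_nsmul_right hcon n
          exact absurd (hax'.trans this) (not_le.2 hnd)
        calc ψ b = δ + ψ a := by rw [hδ, sub_add_cancel]
          _ < x + ψ a := add_lt_add_left hδx _
    · -- monotonicity
      intro x _ y _ hx hxy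
      refine hM y x (ne_of_gt (lt_of_lt_of_le hx hxy)) (ne_of_gt hx) ?_
      exact ⟨1, one_pos, by
        rw [one_nsmul, abs_of_pos hx, abs_of_pos (lt_of_lt_of_le hx hxy)]
        exact hxy⟩
  -- archimedean invariance under real scaling
  have hrsc : ∀ (c : ℝ) (x : Γs), c ≠ 0 → x ≠ 0 →
      (c • x ≠ 0 ∧ ArchLE (c • x) x ∧ ArchLE x (c • x)) := by
    intro c x hc0 hx0
    have habs : |c • x| = |c| • |x| := rabs_smul hsmul c x
    have hcpos : (0 : ℝ) < |c| := abs_pos.2 hc0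
    have hxpos : (0 : Γs) < |x| := abs_pos.2 hx0
    have hcx0 : c • x ≠ 0 := by
      intro h
      rw [h, abs_zero] at habs
      exact absurd habs.symm (ne_of_gt (hsmul _ _ hcpos hxpos))
    obtain ⟨n, hcn⟩ := exists_nat_ge |c|
    obtain ⟨m, hcm⟩ := exists_nat_ge (|c|)⁻¹
    have hn1 : |c| ≤ ((n + 1 : ℕ) : ℝ) := by push_cast; linarith
    have hm1 : (|c|)⁻¹ ≤ ((m + 1 : ℕ) : ℝ) := by push_cast; linarith
    refine ⟨hcx0, ⟨n + 1, Nat.succ_pos n, ?_⟩, ⟨m + 1, Nat.succ_pos m, ?_⟩⟩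
    · rw [habs, nsmul_eq_rsmul]
      exact rsmul_le_right hsmul (abs_nonneg x) hn1
    · rw [nsmul_eq_rsmul]
      have h1 : |x| = (|c|)⁻¹ • |c • x| := by
        rw [habs, smul_smul, inv_mul_cancel₀ (ne_of_gt hcpos), one_smul]
      rw [h1]
      exact rsmul_le_right hsmul (abs_nonneg _) hm1
  refine ⟨ψs, ⟨hext, hcouple⟩, ?_, ?_, ?_⟩
  · -- uniqueness
    intro ψ' ⟨hext', hcpl'⟩ x hx0
    obtain ⟨haG, ha0, hxa, hax⟩ := hφ x hx0
    have h1 : ψ' x = ψ' (φ x hx0) :=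
      psi_eq hcpl' (fun a _ => trivial) (fun a _ _ => trivial)
        trivial trivial hx0 ha0 hxa hax
    rw [h1, hext' _ haG ha0, hval x hx0]
  · -- H-couple over ℝ
    refine ⟨hcouple, ?_⟩
    intro x _ c hx0 hc0
    obtain ⟨hcx0, h1, h2⟩ := hrsc c x hc0 hx0
    exact hMeq (c • x) x hcx0 hx0 h1 h2
  · -- Hahn type iff Hardy type
    constructor
    · -- Hahn for ψs → Hardy for ψ
      intro hH α hαG β hβG hα0 hβ0
      constructor
      · intro hlt
        rw [← not_archLE_iff]
        intro harchβα
        exact absurd (psi_anti hψ hnegG hnsG hαG hβG hα0 hβ0 harchβα) (not_le.2 hlt)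
      · intro h
        have hαβ : |α| < |β| := by simpa using h 1 one_pos
        have hle : ψ β ≤ ψ α :=
          psi_anti hψ hnegG hnsG hβG hαG hβ0 hα0 ⟨1, one_pos, by rw [one_nsmul]; exact hαβ.le⟩
        rcases hle.lt_or_eq with h' | heq
        · exact h'
        exfalso
        have hψeq : ψs α = ψs β := by
          rw [hext α hαG hα0, hext β hβG hβ0, heq]
        obtain ⟨c, hc0, hcase⟩ := hH α trivial β trivial hα0 hβ0 hψeq
        have hcpos : (0 : ℝ) < |c| := abs_pos.2 hc0
        -- pick n ≥ 2|c|⁻¹, n ≥ 1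
        obtain ⟨n₀, hn₀⟩ := exists_nat_ge (2 * (|c|)⁻¹)
        set n := n₀ + 1 with hn
        have hnpos : 0 < n := Nat.succ_pos n₀
        have hcn : 2 * (|c|)⁻¹ ≤ (n : ℝ) := by rw [hn]; push_cast; linarith
        have hstep : ((2:ℝ)) • |α| < |c| • |β| := by
          have h1 : |c| • ((n:ℝ) • |α|) < |c| • |β| := by
            have := h n hnpos
            rw [nsmul_eq_rsmul] at this
            exact rsmul_lt_left hsmul hcpos this
          have h2 : ((2:ℝ)) • |α| ≤ |c| • ((n:ℝ) • |α|) := by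
            rw [smul_smul]
            refine rsmul_le_right hsmul (abs_nonneg α) ?_
            calc (2:ℝ) = |c| * (2 * (|c|)⁻¹) := by field_simp
              _ ≤ |c| * n := by
                exact mul_le_mul_of_nonneg_left hcn (abs_nonneg c)
          exact h2.trans_lt h1
        have habscb : |c • β| = |c| • |β| := rabs_smul hsmul c β
        -- auxiliary: |α| = |c|•|β| is impossible
        have haux : α ≠ c • β := by
          intro heq2
          have : |α| = |c| • |β| := by rw [heq2, habscb]
          rw [← this] at hstep
          have : |α| ≤ ((2:ℝ)) • |α| := by
            calc |α| = ((1:ℝ)) • |α| := (one_smul ℝ _).symm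
              _ ≤ ((2:ℝ)) • |α| := rsmul_le_right hsmul (abs_nonneg α) one_le_two
          exact absurd (this.trans_lt hstep) (lt_irrefl _)
        rcases hcase with hz0 | hlt'
        · exact haux (sub_eq_zero.1 hz0)
        · set z := α - c • β with hzdef
          have hz0 : z ≠ 0 := fun h => haux (sub_eq_zero.1 h)
          -- [z] = [β]
          have hcb : |c • β| ≤ |α| + |z| := by
            calc |c • β| = |α - z| := by rw [hzdef, sub_sub_cancel]
              _ ≤ |α| + |z| := abs_sub _ _
          have hBZ : |c| • |β| ≤ |z| + |z| := by
            by_contra hcon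
            push_neg at hcon
            have h6 : |c| • |β| + |c| • |β| ≤ (|α| + |z|) + (|α| + |z|) := by
              rw [← habscb]; exact add_le_add hcb hcb
            have h7 : (|α| + |z|) + (|α| + |z|) = (|α| + |α|) + (|z| + |z|) := by abel
            have h8 : ((2:ℝ)) • |α| = |α| + |α| := two_smul ℝ _
            have h9 : (|α| + |α|) + (|z| + |z|) < |c| • |β| + (|z| + |z|) :=
              add_lt_add_left (h8 ▸ hstep) _
            have h10 : |c| • |β| + |c| • |β| < |c| • |β| + (|z| + |z|) :=
              (h6.trans_eq h7).trans_lt h9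
            have h11 : |c| • |β| < |z| + |z| := lt_of_add_lt_add_left h10
            exact absurd h11 (not_lt.2 hcon.le)
          have harch1 : ArchLE β z := by
            refine ⟨n, hnpos, ?_⟩
            have h12 : |β| = (|c|)⁻¹ • (|c| • |β|) := by
              rw [smul_smul, inv_mul_cancel₀ (ne_of_gt hcpos), one_smul]
            rw [h12, nsmul_eq_rsmul]
            calc (|c|)⁻¹ • (|c| • |β|) ≤ (|c|)⁻¹ • (|z| + |z|) :=
                  rsmul_le_left hsmul (by positivity) hBZ
              _ = (|c|)⁻¹ • (((2:ℝ)) • |z|) := by rw [two_smul ℝ]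
              _ = ((|c|)⁻¹ * 2) • |z| := by rw [smul_smul]
              _ ≤ ((n:ℝ)) • |z| := by
                  refine rsmul_le_right hsmul (abs_nonneg z) ?_
                  rw [mul_comm]; exact hcn
          obtain ⟨n₁, hcn1⟩ := exists_nat_ge (1 + |c|)
          have harch2 : ArchLE z β := by
            refine ⟨n₁ + 1, Nat.succ_pos n₁, ?_⟩
            have h13 : |z| ≤ |α| + |c • β| := by
              rw [hzdef]; exact abs_sub _ _
            have h14 : |z| ≤ |β| + |c| • |β| := by
              refine h13.trans ?_
              rw [habscb]
              exact add_le_add_left hαβ.le _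
            have h15 : |β| + |c| • |β| = ((1 + |c|)) • |β| := by
              rw [add_smul, one_smul]
            rw [nsmul_eq_rsmul]
            calc |z| ≤ ((1 + |c|)) • |β| := h14.trans_eq h15
              _ ≤ ((n₁ + 1 : ℕ) : ℝ) • |β| := by
                  refine rsmul_le_right hsmul (abs_nonneg β) ?_
                  push_cast; linarith
          have hzβ : ψs z = ψs β := hMeq z β hz0 hβ0 harch2 harch1
          have : ψs α = ψs z := by rw [hψeq, hzβ]
          exact absurd hlt' (not_lt.2 this.ge)
    · -- Hardy for ψ → Hahn for ψs
      intro hHardy x _ y _ hx0 hy0 hψeq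
      obtain ⟨haG, ha0, hxa, hax⟩ := hφ x hx0
      obtain ⟨hbG, hb0, hyb, hby⟩ := hφ y hy0
      set a := φ x hx0
      set b := φ y hy0
      have hab : ψ a = ψ b := by
        rw [← hval x hx0, ← hval y hy0, hψeq]
      have harchba : ArchLE b a := by
        by_contra hcon
        rw [not_archLE_iff] at hcon
        have := (hHardy a haG b hbG ha0 hb0).2 hcon
        exact absurd hab (ne_of_gt this)
      have harchab : ArchLE a b := by
        by_contra hcon
        rw [not_archLE_iff] at hcon
        have := (hHardy b hbG a haG hb0 ha0).2 hcon
        exact absurd hab (ne_of_lt this)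
      have hxy : ArchLE x y := archLE_trans' (archLE_trans' hxa harchab) hby
      have hyx : ArchLE y x := archLE_trans' (archLE_trans' hyb harchba) hax
      obtain ⟨c, hc0, hcase⟩ := exists_real_coeff hsmul hy0 hxy hyx
      refine ⟨c, hc0, ?_⟩
      rcases hcase with hz0 | ⟨hz0, hnarch⟩
      · exact Or.inl hz0
      · refine Or.inr ?_
        set z := x - c • y with hzdef
        obtain ⟨ha'G, ha'0, hza', ha'z⟩ := hφ z hz0
        set a' := φ z hz0
        have hkey : ∀ n : ℕ, 0 < n → n • |a'| < |b| := by
          rw [← not_archLE_iff]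
          intro hcon
          exact hnarch (archLE_trans' (archLE_trans' hyb hcon) ha'z)
        have hba' : ψ b < ψ a' := (hHardy a' ha'G b hbG ha'0 hb0).2 hkey
        rw [hval x hx0, hval z hz0]
        calc ψ a = ψ b := hab
          _ < ψ a' := hba'
end
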